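/- Let u_{i+1} and u_{i+2} be successive PIA iterates: L̃u_{i+1} − π_{i+1}(u_{i+1})_y + π_{i+1}²/(4κQ) = 0 and L̃u_{i+2} − π_{i+2}(u_{i+2})_y + π_{i+2}²/(4κQ) = 0, where π_{j+1} = 2κQ (u_j)_y. Then v := u_{i+2} − u_{i+1} satisfies the linear equation L̃v − π_{i+2} v_y = (π_{i+2} − π_{i+1})²/(4κQ) = κQ·((u_{i+1})_y − (u_i)_y)². -/
import Mathlib


/-- Subtracting two successive PIA equations: the difference `v = u_{i+2} − u_{i+1}`
satisfies the linear equation `L̃v − π_{i+2} v_y = (π_{i+2} − π_{i+1})²/(4κQ)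
= κQ((u_{i+1})_y − (u_i)_y)²`. -/
theorem stmt_13 {α : Type*} (κ Q : ℝ) (hκ : 0 < κ) (hQ : 0 < Q)
    (Lt D : (α → ℝ) → (α → ℝ)) (hL : IsLinearMap ℝ Lt) (hD : IsLinearMap ℝ D)
    (ui ui1 ui2 π1 π2 : α → ℝ)
    (hπ1 : ∀ z, π1 z = 2 * κ * Q * D ui z)
    (hπ2 : ∀ z, π2 z = 2 * κ * Q * D ui1 z)
    (hPDE1 : ∀ z, Lt ui1 z - π1 z * D ui1 z + (π1 z) ^ 2 / (4 * κ * Q) = 0)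
    (hPDE2 : ∀ z, Lt ui2 z - π2 z * D ui2 z + (π2 z) ^ 2 / (4 * κ * Q) = 0) :
    ∀ z, Lt (ui2 - ui1) z - π2 z * D (ui2 - ui1) z
          = (π2 z - π1 z) ^ 2 / (4 * κ * Q) ∧
        (π2 z - π1 z) ^ 2 / (4 * κ * Q) = κ * Q * (D ui1 z - D ui z) ^ 2 := by
  intro z
  have hLsub : Lt (ui2 - ui1) z = Lt ui2 z - Lt ui1 z := by
    have h := congrFun ((hL.mk' Lt).map_sub ui2 ui1) z
    simpa using h
  have hDsub : D (ui2 - ui1) z = D ui2 z - D ui1 z := by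
    have h := congrFun ((hD.mk' D).map_sub ui2 ui1) z
    simpa using h
  have h1 := hPDE1 z
  have h2 := hPDE2 z
  have hπ1' := hπ1 z
  have hπ2' := hπ2 z
  have hne : (4 : ℝ) * κ * Q ≠ 0 := by positivity
  constructor
  · rw [hLsub, hDsub, hπ1', hπ2']
    rw [hπ1'] at h1; rw [hπ2'] at h2
    field_simp at h1 h2 ⊢
    linear_combination h2 - h1
  · rw [hπ1', hπ2']
    field_simp
    ring
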